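/- arXiv:math/0411105 — 2 statements merged into one kernel-verified Lean document; each statement's English description precedes it below -/
import Mathlib

section
/- Let (B,i,j) be a representation datum for the quiver of type A_{n-1} which is stable. If g = (g_k)_{k∈I}, with each g_k an invertible linear automorphism of V_k, satisfies g_l ∘ B_{k,l} ∘ g_k^{-1} = B_{k,l} for every arrow (k,l), g_k ∘ i_k = i_k for all k, and j_k ∘ g_k^{-1} = j_k for all k, then g_k = id_{V_k} for all k. (Equivalently: the stabilizer in G_v = ∏_{k∈I} GL(V_k) of any stable point is trivial.) -/
/-! The vectors fixed by `g` form a `B`-stable family of subspaces containing the image of `i`,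
so by stability they exhaust every `V k`. -/

theorem LinearEquiv.apply_map_eq_of_conj_eq {R M N : Type*} [Semiring R]
    [AddCommMonoid M] [AddCommMonoid N] [Module R M] [Module R N]
    {e : M ≃ₗ[R] M} {f : N ≃ₗ[R] N} {B : M →ₗ[R] N} (hB : ∀ v, f (B (e.symm v)) = B v)
    {v : M} (hv : e v = v) : f (B v) = B v := by
  have hv' : e.symm v = v := e.symm_apply_eq.mpr hv.symm
  simpa only [hv'] using hB v

theorem stabilizer_of_stable_point_trivial_general
    (n : ℕ)
    (V : ℕ → Type*) [∀ k, AddCommGroup (V k)] [∀ k, Module ℂ (V k)]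
    (W : ℕ → Type*) [∀ k, AddCommGroup (W k)] [∀ k, Module ℂ (W k)]
    (Bdown : ∀ k, V k →ₗ[ℂ] V (k - 1))
    (Bup : ∀ k, V (k - 1) →ₗ[ℂ] V k)
    (i : ∀ k, W k →ₗ[ℂ] V k)
    -- stability of the datum (B, i, j):
    (hstable : ∀ S : ∀ k, Submodule ℂ (V k),
      (∀ k, 2 ≤ k → k ≤ n - 1 → ∀ v ∈ S k, Bdown k v ∈ S (k - 1)) →
      (∀ k, 2 ≤ k → k ≤ n - 1 → ∀ v ∈ S (k - 1), Bup k v ∈ S k) →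
      (∀ k, 1 ≤ k → k ≤ n - 1 → LinearMap.range (i k) ≤ S k) →
      ∀ k, 1 ≤ k → k ≤ n - 1 → S k = ⊤)
    -- an element g of G_v fixing the point (B, i, j):
    (g : ∀ k, V k ≃ₗ[ℂ] V k)
    (hgBdown : ∀ k, 2 ≤ k → k ≤ n - 1 → ∀ v, g (k - 1) (Bdown k ((g k).symm v)) = Bdown k v)
    (hgBup : ∀ k, 2 ≤ k → k ≤ n - 1 → ∀ v, g k (Bup k ((g (k - 1)).symm v)) = Bup k v)
    (hgi : ∀ k, 1 ≤ k → k ≤ n - 1 → ∀ w, g k (i k w) = i k w) :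
    ∀ k, 1 ≤ k → k ≤ n - 1 → ∀ v, g k v = v := by
  intro k hk₁ hk v
  have hfixed_eq_top :=
    hstable (fun k => LinearMap.eqLocus (g k).toLinearMap LinearMap.id)
      (fun k h₂ hk _ hv => LinearEquiv.apply_map_eq_of_conj_eq (hgBdown k h₂ hk) hv)
      (fun k h₂ hk _ hv => LinearEquiv.apply_map_eq_of_conj_eq (hgBup k h₂ hk) hv)
      (fun k h₁ hk => by rintro _ ⟨w, rfl⟩; exact hgi k h₁ hk w)
      k hk₁ hk
  exact hfixed_eq_top.ge (Submodule.mem_top (x := v))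

/-- The stabilizer in `G_v = ∏_{k ∈ I} GL(V_k)` of any stable point
`(B, i, j)` of the representation space of the type `A_{n-1}` quiver is trivial.
Vertices are `1, …, n-1`; `Bdown k : V k → V (k-1)` is the map along the arrow
`h_{k,k-1}` and `Bup k : V (k-1) → V k` is the map along the arrow `h_{k-1,k}`
(for `2 ≤ k ≤ n-1`). -/
theorem stabilizer_of_stable_point_trivial
    (n : ℕ) (hn : 2 ≤ n)
    (V : ℕ → Type*) [∀ k, AddCommGroup (V k)] [∀ k, Module ℂ (V k)]
    (W : ℕ → Type*) [∀ k, AddCommGroup (W k)] [∀ k, Module ℂ (W k)]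
    (Bdown : ∀ k, V k →ₗ[ℂ] V (k - 1))
    (Bup : ∀ k, V (k - 1) →ₗ[ℂ] V k)
    (i : ∀ k, W k →ₗ[ℂ] V k) (j : ∀ k, V k →ₗ[ℂ] W k)
    -- stability of the datum (B, i, j):
    (hstable : ∀ S : ∀ k, Submodule ℂ (V k),
      (∀ k, 2 ≤ k → k ≤ n - 1 → ∀ v ∈ S k, Bdown k v ∈ S (k - 1)) →
      (∀ k, 2 ≤ k → k ≤ n - 1 → ∀ v ∈ S (k - 1), Bup k v ∈ S k) →
      (∀ k, 1 ≤ k → k ≤ n - 1 → LinearMap.range (i k) ≤ S k) →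
      ∀ k, 1 ≤ k → k ≤ n - 1 → S k = ⊤)
    -- an element g of G_v fixing the point (B, i, j):
    (g : ∀ k, V k ≃ₗ[ℂ] V k)
    (hgBdown : ∀ k, 2 ≤ k → k ≤ n - 1 → ∀ v, g (k - 1) (Bdown k ((g k).symm v)) = Bdown k v)
    (hgBup : ∀ k, 2 ≤ k → k ≤ n - 1 → ∀ v, g k (Bup k ((g (k - 1)).symm v)) = Bup k v)
    (hgi : ∀ k, 1 ≤ k → k ≤ n - 1 → ∀ w, g k (i k w) = i k w)
    (hgj : ∀ k, 1 ≤ k → k ≤ n - 1 → ∀ v, j k ((g k).symm v) = j k v) :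
    ∀ k, 1 ≤ k → k ≤ n - 1 → ∀ v, g k v = v :=
  stabilizer_of_stable_point_trivial_general n V W Bdown Bup i hstable g hgBdown hgBup hgi
end

section
/- Set x = j ∘ i ∈ End(W) and, for 1 ≤ l ≤ n−1, F_l = ker( B_{l−1,l} ∘ ⋯ ∘ B_{1,2} ∘ i ) ⊆ W (so F_1 = ker i), with F_0 = 0. Then for every 2 ≤ k ≤ n−1: x^{−1}(F_{k−1}) = ker( B_{k,k−1} ∘ B_{k−1,k} ∘ B_{k−2,k−1} ∘ ⋯ ∘ B_{1,2} ∘ i ). -/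
noncomputable section

variable (V : ℕ → Type*) [∀ k, AddCommGroup (V k)] [∀ k, Module ℂ (V k)]

/-- The ascending composite `B_{l-1,l} ∘ ⋯ ∘ B_{1,2} : V 1 →ₗ V l` (the identity for
`l = 1`), where `Bup k : V (k-1) → V k` is the map `B_{k-1,k}`. -/
def asc (Bup : ∀ k, V (k - 1) →ₗ[ℂ] V k) : (l : ℕ) → (V 1 →ₗ[ℂ] V l)
  | 0 => 0
  | 1 => LinearMap.id
  | l + 2 => (Bup (l + 2)).comp (asc Bup (l + 1))

/-! Pushing `i ∘ j = B_{2,1} ∘ B_{1,2}` up the quiver one step at a time with the relations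
`B_{l-1,l} ∘ B_{l,l-1} = B_{l+1,l} ∘ B_{l,l+1}` gives
`B_{m-1,m} ∘ ⋯ ∘ B_{1,2} ∘ i ∘ j = B_{m+1,m} ∘ B_{m,m+1} ∘ B_{m-1,m} ∘ ⋯ ∘ B_{1,2}`.
Composing with `i` on the right, the preimage under `x = j ∘ i` of the kernel of
`B_{m-1,m} ∘ ⋯ ∘ B_{1,2} ∘ i` is the kernel of the right-hand side composed with `i`. -/

lemma asc_succ (Bup : ∀ k, V (k - 1) →ₗ[ℂ] V k) {m : ℕ} (hm : 1 ≤ m) :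
    asc V Bup (m + 1) = (Bup (m + 1)).comp (asc V Bup m) := by
  obtain ⟨l, rfl⟩ : ∃ l, m = l + 1 := ⟨m - 1, by omega⟩
  rfl

theorem asc_comp_i_comp_j {n : ℕ} {W : Type*} [AddCommGroup W] [Module ℂ W]
    (Bdown : ∀ k, V k →ₗ[ℂ] V (k - 1)) (Bup : ∀ k, V (k - 1) →ₗ[ℂ] V k)
    (i : W →ₗ[ℂ] V 1) (j : V 1 →ₗ[ℂ] W)
    (hij : i.comp j = (Bdown 2).comp (Bup 2))
    (hrel : ∀ l, 2 ≤ l → l ≤ n - 2 →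
      (Bup l).comp (Bdown l) = (Bdown (l + 1)).comp (Bup (l + 1)))
    {m : ℕ} (hm : 1 ≤ m) (hmn : m + 1 ≤ n - 1) :
    (asc V Bup m).comp (i.comp j) = (Bdown (m + 1)).comp ((Bup (m + 1)).comp (asc V Bup m)) := by
  induction m, hm using Nat.le_induction with
  | base => exact hij
  | succ m hm ih =>
    rw [asc_succ V Bup hm, LinearMap.comp_assoc, ih (by omega), ← LinearMap.comp_assoc,
      hrel (m + 1) (by omega) (by omega), LinearMap.comp_assoc]

theorem preimage_flag_eq_ker
    (n : ℕ)
    (W : Type*) [AddCommGroup W] [Module ℂ W]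
    (Bdown : ∀ k, V k →ₗ[ℂ] V (k - 1)) (Bup : ∀ k, V (k - 1) →ₗ[ℂ] V k)
    (i : W →ₗ[ℂ] V 1) (j : V 1 →ₗ[ℂ] W)
    (hij : i.comp j = (Bdown 2).comp (Bup 2))
    (hrel : ∀ l, 2 ≤ l → l ≤ n - 2 →
      (Bup l).comp (Bdown l) = (Bdown (l + 1)).comp (Bup (l + 1))) :
    ∀ k, 2 ≤ k → k ≤ n - 1 →
      Submodule.comap (j.comp i) (LinearMap.ker ((asc V Bup (k - 1)).comp i))
        = LinearMap.ker ((Bdown k).comp ((Bup k).comp ((asc V Bup (k - 1)).comp i))) := by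
  intro k hk hkn
  obtain ⟨m, rfl⟩ : ∃ m, k = m + 1 := ⟨k - 1, by omega⟩
  have key := asc_comp_i_comp_j V Bdown Bup i j hij hrel (m := m) (by omega) hkn
  rw [← LinearMap.ker_comp]
  exact congrArg (LinearMap.ker <| · ∘ₗ i) key

end
end
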